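/- arXiv:2510.27167 — 4 statements merged into one kernel-verified Lean document; each statement's English description precedes it below -/
import Mathlib

section
/- Let n be a finite index type, let A and M be n×n real matrices, and let f, p, y be vectors in ℝⁿ. Assume: (i) A is invertible and every entry of A⁻¹ is nonnegative; (ii) every entry of M is nonnegative; (iii) Aᵀ p = M y − f; (iv) A y = −M p. If every component of M y − f is nonnegative, then every component of p is nonnegative, every component of y is nonpositive, and f_i ≤ (M y)_i ≤ 0 for every index i. -/
/-!
Everything follows from inverse positivity: `p = A⁻ᵀ (M y - f) ≥ 0`, hence
`-y = A⁻¹ (M p) ≥ 0`, and then `M y = -(M (-y)) ≤ 0` because `M ≥ 0`.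
-/

open Matrix

section InversePositive

variable {m n R : Type*} [Fintype n]

theorem Matrix.mulVec_nonneg_of_nonneg [Semiring R] [PartialOrder R] [IsOrderedRing R]
    {B : Matrix m n R} (hB : ∀ i j, 0 ≤ B i j) {v : n → R} (hv : 0 ≤ v) : 0 ≤ B *ᵥ v :=
  fun i => dotProduct_nonneg_of_nonneg (fun j => hB i j) hv

variable [DecidableEq n] [CommRing R] [PartialOrder R] [IsOrderedRing R] {A : Matrix n n R}

theorem Matrix.nonneg_of_mulVec_nonneg (hA : IsUnit A) (hAinv : ∀ i j, 0 ≤ A⁻¹ i j)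
    {x : n → R} (hx : 0 ≤ A *ᵥ x) : 0 ≤ x := by
  have hx_eq : x = A⁻¹ *ᵥ (A *ᵥ x) := by
    rw [mulVec_mulVec, nonsing_inv_mul _ ((isUnit_iff_isUnit_det A).mp hA), one_mulVec]
  exact hx_eq ▸ mulVec_nonneg_of_nonneg hAinv hx

theorem Matrix.nonneg_of_transpose_mulVec_nonneg (hA : IsUnit A) (hAinv : ∀ i j, 0 ≤ A⁻¹ i j)
    {x : n → R} (hx : 0 ≤ Aᵀ *ᵥ x) : 0 ≤ x :=
  nonneg_of_mulVec_nonneg ((isUnit_transpose A).mpr hA)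
    (fun i j => by rw [← transpose_nonsing_inv]; exact hAinv j i) hx

end InversePositive

/-- Discrete desired-state bounds (case `y_d ≤ 0`): if the EAFE stiffness matrix `A` is
invertible with entrywise nonnegative inverse, the mass matrix `M` has nonnegative entries,
`Aᵀ p = M y - f`, `A y = -(M p)`, and every component of `M y - f` is nonnegative, then
`p ≥ 0`, `y ≤ 0`, and `f i ≤ (M y) i ≤ 0` for every `i`. -/
theorem discrete_desired_state_bounds_nonpos {n : Type*} [Fintype n] [DecidableEq n]
    (A M : Matrix n n ℝ) (f p y : n → ℝ)
    (hA : IsUnit A) (hAinv : ∀ i j, 0 ≤ A⁻¹ i j)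
    (hM : ∀ i j, 0 ≤ M i j)
    (h1 : Aᵀ *ᵥ p = M *ᵥ y - f)
    (h2 : A *ᵥ y = -(M *ᵥ p))
    (hpos : ∀ i, 0 ≤ (M *ᵥ y - f) i) :
    (∀ i, 0 ≤ p i) ∧ (∀ i, y i ≤ 0) ∧ (∀ i, f i ≤ (M *ᵥ y) i ∧ (M *ᵥ y) i ≤ 0) := by
  have hp : 0 ≤ p := nonneg_of_transpose_mulVec_nonneg hA hAinv (h1 ▸ hpos)
  have hy : y ≤ 0 := by
    refine neg_nonneg.mp (nonneg_of_mulVec_nonneg hA hAinv ?_)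
    rw [mulVec_neg, h2, neg_neg]
    exact mulVec_nonneg_of_nonneg hM hp
  have hMy : M *ᵥ y ≤ 0 := by
    simpa only [mulVec_neg, neg_nonneg] using mulVec_nonneg_of_nonneg hM (neg_nonneg.mpr hy)
  exact ⟨hp, hy, fun i => ⟨sub_nonneg.mp (hpos i), hMy i⟩⟩
end

section
/- Let n be a finite index type, let A and M be n×n real matrices, and let f, p, y be vectors in ℝⁿ. Assume: (i) A is invertible and every entry of A⁻¹ is nonnegative; (ii) every entry of M is nonnegative; (iii) Aᵀ p = M y − f; (iv) A y = −M p. If every component of M y − f is nonpositive, then every component of p is nonpositive, every component of y is nonnegative, and 0 ≤ (M y)_i ≤ f_i for every index i. -/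
/-!
An entrywise nonnegative matrix is monotone on vectors, and a matrix with entrywise nonnegative
inverse is inverse-monotone: `A x ≤ A z` implies `x ≤ z`. Since `(Aᵀ)⁻¹ = (A⁻¹)ᵀ`, the adjoint
equation `Aᵀ p = M y - f ≤ 0` gives `p ≤ 0`; then `M p ≤ 0`, so the state equation
`A y = -(M p) ≥ 0` gives `y ≥ 0`, whence `0 ≤ M y`, while `M y ≤ f` is the hypothesis itself.
-/

open Matrix

namespace Matrix

variable {m n R : Type*} [Fintype n]

theorem mulVec_mono_of_nonneg [Semiring R] [PartialOrder R] [IsOrderedRing R]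
    {B : Matrix m n R} (hB : ∀ i j, 0 ≤ B i j) {v w : n → R} (hvw : v ≤ w) :
    B *ᵥ v ≤ B *ᵥ w :=
  fun i => Finset.sum_le_sum fun j _ => mul_le_mul_of_nonneg_left (hvw j) (hB i j)

variable [DecidableEq n] [CommRing R] [PartialOrder R]

theorem transpose_inv_nonneg {A : Matrix n n R} (hAinv : ∀ i j, 0 ≤ A⁻¹ i j) (i j : n) :
    0 ≤ Aᵀ⁻¹ i j := by
  rw [← transpose_nonsing_inv]
  exact hAinv j i

theorem le_of_mulVec_le_of_inv_nonneg [IsOrderedRing R] {A : Matrix n n R} (hA : IsUnit A)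
    (hAinv : ∀ i j, 0 ≤ A⁻¹ i j) {x z : n → R} (hxz : A *ᵥ x ≤ A *ᵥ z) : x ≤ z := by
  have hcancel : ∀ v, A⁻¹ *ᵥ (A *ᵥ v) = v := fun v => by
    rw [mulVec_mulVec, nonsing_inv_mul _ ((isUnit_iff_isUnit_det A).mp hA), one_mulVec]
  simpa only [hcancel] using mulVec_mono_of_nonneg hAinv hxz

end Matrix

/-- Discrete desired-state bounds (case `y_d ≥ 0`): if the EAFE stiffness matrix `A` is
invertible with entrywise nonnegative inverse, the mass matrix `M` has nonnegative entries,
`Aᵀ p = M y - f`, `A y = -(M p)`, and every component of `M y - f` is nonpositive, then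
`p ≤ 0`, `y ≥ 0`, and `0 ≤ (M y) i ≤ f i` for every `i`. -/
theorem discrete_desired_state_bounds_nonneg {n : Type*} [Fintype n] [DecidableEq n]
    (A M : Matrix n n ℝ) (f p y : n → ℝ)
    (hA : IsUnit A) (hAinv : ∀ i j, 0 ≤ A⁻¹ i j)
    (hM : ∀ i j, 0 ≤ M i j)
    (h1 : Aᵀ *ᵥ p = M *ᵥ y - f)
    (h2 : A *ᵥ y = -(M *ᵥ p))
    (hneg : ∀ i, (M *ᵥ y - f) i ≤ 0) :
    (∀ i, p i ≤ 0) ∧ (∀ i, 0 ≤ y i) ∧ (∀ i, 0 ≤ (M *ᵥ y) i ∧ (M *ᵥ y) i ≤ f i) := by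
  have hp : p ≤ 0 :=
    le_of_mulVec_le_of_inv_nonneg (isUnit_transpose _ |>.mpr hA) (transpose_inv_nonneg hAinv)
      (by rw [h1, mulVec_zero]; exact hneg)
  have hMp : M *ᵥ p ≤ 0 := by simpa using mulVec_mono_of_nonneg hM hp
  have hy : 0 ≤ y :=
    le_of_mulVec_le_of_inv_nonneg hA hAinv (by rw [h2, mulVec_zero]; exact neg_nonneg.mpr hMp)
  have hMy : 0 ≤ M *ᵥ y := by simpa using mulVec_mono_of_nonneg hM hy
  exact ⟨hp, hy, fun i => ⟨hMy i, sub_nonpos.mp (hneg i)⟩⟩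
end

section
/- Let x_i, x_j ∈ ℝ² and set τ = x_j − x_i and c(t) = x_i + t·τ for t ∈ [0,1]. Let ε : ℝ² → ℝ, ζ : ℝ² → ℝ², and ψ, y : ℝ² → ℝ be such that: ε is continuous and strictly positive on the segment c([0,1]); ζ is continuous on the segment; ψ and y are differentiable at every point of the segment with gradients continuous along the segment; and for every t ∈ [0,1], ∇ψ(c(t)) · τ = ε(c(t))⁻¹ (ζ(c(t)) · τ). Then ∫₀¹ ε(c(t))⁻¹ e^{ψ(c(t))} (ε(c(t)) ∇y(c(t)) + ζ(c(t)) y(c(t))) · τ dt = e^{ψ(x_j)} y(x_j) − e^{ψ(x_i)} y(x_i). -/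
open scoped RealInnerProductSpace

/-! The substitution `u = e^{ψ} y` (Slotboom variable) turns the flux into a derivative: along the
edge, `(e^{ψ} y)' = e^{ψ} (ψ' y + y') = ε⁻¹ e^{ψ} (ε y' + (ζ · τ) y)` by the defining relation
`ψ' = ε⁻¹ (ζ · τ)` of the edgewise potential, so the edge average is `δ_E(e^{ψ} y)` by the
fundamental theorem of calculus. -/

open Set

theorem DifferentiableAt.hasDerivAt_comp_add_smul {F : Type*} [NormedAddCommGroup F]
    [InnerProductSpace ℝ F] [CompleteSpace F] {f : F → ℝ} {x v : F} {t : ℝ}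
    (hf : DifferentiableAt ℝ f (x + t • v)) :
    HasDerivAt (fun s : ℝ => f (x + s • v)) ⟪gradient f (x + t • v), v⟫ t := by
  have hline : HasDerivAt (fun s : ℝ => x + s • v) v t := by
    simpa using ((hasDerivAt_id t).smul_const v).const_add x
  exact hf.hasGradientAt.hasFDerivAt.comp_hasDerivAt t hline

theorem hasDerivAt_exp_mul_of_hasDerivAt_eq_inv_mul {p q : ℝ → ℝ} {t p' q' e z : ℝ}
    (hp : HasDerivAt p p' t) (hq : HasDerivAt q q' t) (he : e ≠ 0) (hrel : p' = e⁻¹ * z) :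
    HasDerivAt (fun s => Real.exp (p s) * q s)
      (e⁻¹ * Real.exp (p t) * (e * q' + q t * z)) t := by
  refine (hp.exp.mul hq).congr_deriv ?_
  rw [hrel]
  field_simp
  ring

theorem integral_inv_mul_exp_mul_eq_sub {a b : ℝ} (hab : a ≤ b) {p q p' q' e z : ℝ → ℝ}
    (hp : ∀ t ∈ Icc a b, HasDerivAt p (p' t) t) (hq : ∀ t ∈ Icc a b, HasDerivAt q (q' t) t)
    (hq' : ContinuousOn q' (Icc a b)) (he : ContinuousOn e (Icc a b))
    (he₀ : ∀ t ∈ Icc a b, e t ≠ 0) (hz : ContinuousOn z (Icc a b))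
    (hrel : ∀ t ∈ Icc a b, p' t = (e t)⁻¹ * z t) :
    ∫ t in a..b, (e t)⁻¹ * Real.exp (p t) * (e t * q' t + q t * z t)
      = Real.exp (p b) * q b - Real.exp (p a) * q a := by
  have hpc : ContinuousOn p (Icc a b) := fun t ht => (hp t ht).continuousAt.continuousWithinAt
  have hqc : ContinuousOn q (Icc a b) := fun t ht => (hq t ht).continuousAt.continuousWithinAt
  refine intervalIntegral.integral_eq_sub_of_hasDerivAt (f := fun s => Real.exp (p s) * q s)
    (fun t ht => ?_) ?_
  · rw [uIcc_of_le hab] at ht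
    exact hasDerivAt_exp_mul_of_hasDerivAt_eq_inv_mul (hp t ht) (hq t ht) (he₀ t ht) (hrel t ht)
  · refine ContinuousOn.intervalIntegrable_of_Icc hab ?_
    exact ((he.inv₀ he₀).mul (Real.continuous_exp.comp_continuousOn hpc)).mul
      ((he.mul hq').add (hqc.mul hz))

theorem eafe_edge_dof_identity_general
    (xi xj : EuclideanSpace ℝ (Fin 2))
    (τ : EuclideanSpace ℝ (Fin 2)) (hτ : τ = xj - xi)
    (c : ℝ → EuclideanSpace ℝ (Fin 2)) (hc : ∀ t, c t = xi + t • τ)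
    (ε : EuclideanSpace ℝ (Fin 2) → ℝ)
    (ζ : EuclideanSpace ℝ (Fin 2) → EuclideanSpace ℝ (Fin 2))
    (ψ y : EuclideanSpace ℝ (Fin 2) → ℝ)
    (hεcont : ContinuousOn (fun t => ε (c t)) (Set.Icc 0 1))
    (hεpos : ∀ t ∈ Set.Icc (0:ℝ) 1, 0 < ε (c t))
    (hζcont : ContinuousOn (fun t => ζ (c t)) (Set.Icc 0 1))
    (hψdiff : ∀ t ∈ Set.Icc (0:ℝ) 1, DifferentiableAt ℝ ψ (c t))
    (hydiff : ∀ t ∈ Set.Icc (0:ℝ) 1, DifferentiableAt ℝ y (c t))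
    (hygrad : ContinuousOn (fun t => gradient y (c t)) (Set.Icc 0 1))
    (hrel : ∀ t ∈ Set.Icc (0:ℝ) 1,
      ⟪gradient ψ (c t), τ⟫ = (ε (c t))⁻¹ * ⟪ζ (c t), τ⟫) :
    ∫ t in (0:ℝ)..1,
        (ε (c t))⁻¹ * Real.exp (ψ (c t)) *
          ⟪ε (c t) • gradient y (c t) + y (c t) • ζ (c t), τ⟫
      = Real.exp (ψ xj) * y xj - Real.exp (ψ xi) * y xi := by
  obtain rfl : c = fun t => xi + t • τ := funext hc
  simp only [inner_add_left, real_inner_smul_left]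
  convert integral_inv_mul_exp_mul_eq_sub zero_le_one
    (fun t ht => (hψdiff t ht).hasDerivAt_comp_add_smul)
    (fun t ht => (hydiff t ht).hasDerivAt_comp_add_smul)
    (hygrad.inner continuousOn_const) hεcont (fun t ht => (hεpos t ht).ne')
    (hζcont.inner continuousOn_const) hrel using 3 <;> simp [hτ]

/-- Edge degree-of-freedom identity of the EAFE scheme: along the segment `c(t) = xᵢ + t τ`
with `τ = xⱼ - xᵢ`, if the edgewise potential `ψ` satisfies `∇ψ·τ = ε⁻¹ (ζ·τ)` on the
segment, then the edge average of `κ⁻¹ J(y)·τ` (with `κ = ε e^{-ψ}` and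
`J(y) = ε ∇y + ζ y`) equals `(e^{ψ} y)(xⱼ) - (e^{ψ} y)(xᵢ)`. -/
theorem eafe_edge_dof_identity
    (xi xj : EuclideanSpace ℝ (Fin 2))
    (τ : EuclideanSpace ℝ (Fin 2)) (hτ : τ = xj - xi)
    (c : ℝ → EuclideanSpace ℝ (Fin 2)) (hc : ∀ t, c t = xi + t • τ)
    (ε : EuclideanSpace ℝ (Fin 2) → ℝ)
    (ζ : EuclideanSpace ℝ (Fin 2) → EuclideanSpace ℝ (Fin 2))
    (ψ y : EuclideanSpace ℝ (Fin 2) → ℝ)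
    (hεcont : ContinuousOn (fun t => ε (c t)) (Set.Icc 0 1))
    (hεpos : ∀ t ∈ Set.Icc (0:ℝ) 1, 0 < ε (c t))
    (hζcont : ContinuousOn (fun t => ζ (c t)) (Set.Icc 0 1))
    (hψdiff : ∀ t ∈ Set.Icc (0:ℝ) 1, DifferentiableAt ℝ ψ (c t))
    (hydiff : ∀ t ∈ Set.Icc (0:ℝ) 1, DifferentiableAt ℝ y (c t))
    (hψgrad : ContinuousOn (fun t => gradient ψ (c t)) (Set.Icc 0 1))
    (hygrad : ContinuousOn (fun t => gradient y (c t)) (Set.Icc 0 1))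
    (hrel : ∀ t ∈ Set.Icc (0:ℝ) 1,
      ⟪gradient ψ (c t), τ⟫ = (ε (c t))⁻¹ * ⟪ζ (c t), τ⟫) :
    ∫ t in (0:ℝ)..1,
        (ε (c t))⁻¹ * Real.exp (ψ (c t)) *
          ⟪ε (c t) • gradient y (c t) + y (c t) • ζ (c t), τ⟫
      = Real.exp (ψ xj) * y xj - Real.exp (ψ xi) * y xi :=
  eafe_edge_dof_identity_general xi xj τ hτ c hc ε ζ ψ y hεcont hεpos hζcont hψdiff hydiff hygrad
    hrel
end

section
/- Let V be a real normed vector space and let V_h be a linear subspace of V. Let a, a_h, m : V × V → ℝ be bilinear forms with m symmetric, and let α > 0, C_a ≥ 0, κ ≥ 0, δ₁ ≥ 0, δ₀ ≥ 0 be constants such that: (i) a_h(v,v) ≥ α‖v‖² and m(v,v) ≥ 0 for all v ∈ V_h; (ii) |a(u,v)| ≤ C_a‖u‖‖v‖ for all u,v ∈ V; (iii) |a_h(u,v) − a(u,v)| ≤ κ‖u‖‖v‖ for all u,v ∈ V_h. Define B((p,y),(q,z)) := a(q,p) − m(y,q) − m(p,z) − a(y,z) and B_h((p,y),(q,z)) :=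 a_h(q,p) − m(y,q) − m(p,z) − a_h(y,z). Let F : V × V → ℝ be linear, let (p̄, ȳ) ∈ V × V satisfy B((p̄,ȳ),(q,z)) = F(q,z) for all (q,z) ∈ V_h × V_h, and let (p̄_h, ȳ_h) ∈ V_h × V_h satisfy B_h((p̄_h,ȳ_h),(q,z)) = F(q,z) for all (q,z) ∈ V_h × V_h. Let Πp̄, Πȳ ∈ V_h satisfy ‖p̄ − Πp̄‖ ≤ δ₁, ‖ȳ − Πȳ‖ ≤ δ₁, and |m(p̄ − Πp̄, z)| ≤ δ₀‖z‖ and |m(ȳ − Πȳ, q)| ≤ δ₀‖q‖ for all q, z ∈ V_h. Then ‖Πp̄ − p̄_h‖ + ‖Πȳ − ȳ_h‖ ≤ (4/α)(κ(‖Πp̄‖ + ‖Πȳ‖) + C_a δ₁ + δ₀). -/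
/-!
Test the error equations with `(e_p, -e_y)`, where `e = Π(p̄, ȳ) - (p̄_h, ȳ_h)`. On such a test
pair the `m`-terms of `B_h(e, ·)` cancel by symmetry of `m`, leaving `a_h(e_p, e_p) + a_h(e_y, e_y)`,
which coercivity bounds below by `α(‖e_p‖² + ‖e_y‖²)`. Subtracting the exact from the discrete
equation rewrites it as a consistency term `(B_h - B)(Π(p̄, ȳ), ·)` plus an interpolation term
`B((p̄, ȳ) - Π(p̄, ȳ), ·)`, each linear in `‖e_p‖ + ‖e_y‖`.
-/

lemma add_le_of_mul_sq_add_sq_le {x y α M : ℝ} (hx : 0 ≤ x) (hy : 0 ≤ y) (hα : 0 < α)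
    (hM : 0 ≤ M) (h : α * (x ^ 2 + y ^ 2) ≤ M * (x + y)) : x + y ≤ 2 / α * M := by
  rcases (add_nonneg hx hy).eq_or_lt with hs | hs
  · rw [← hs]; positivity
  · have hsq : α * (x + y) * (x + y) ≤ 2 * M * (x + y) := by
      nlinarith [sq_nonneg (x - y)]
    rw [div_mul_eq_mul_div, le_div_iff₀ hα, mul_comm]
    exact le_of_mul_le_mul_right hsq hs

section Algebra

variable {V : Type*} [AddCommGroup V] [Module ℝ V]

def saddleForm (a m : V →ₗ[ℝ] V →ₗ[ℝ] ℝ) (u w : V × V) : ℝ :=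
  a w.1 u.1 - m u.2 w.1 - m u.1 w.2 - a u.2 w.2

lemma saddleForm_sub_left (a m : V →ₗ[ℝ] V →ₗ[ℝ] ℝ) (u u' w : V × V) :
    saddleForm a m (u - u') w = saddleForm a m u w - saddleForm a m u' w := by
  simp only [saddleForm, Prod.fst_sub, Prod.snd_sub, map_sub, LinearMap.sub_apply]
  ring

lemma saddleForm_sub_sub_left (a a' m : V →ₗ[ℝ] V →ₗ[ℝ] ℝ) (u w : V × V) :
    saddleForm a m u w - saddleForm a' m u w = saddleForm (a - a') 0 u w := by
  simp only [saddleForm, LinearMap.sub_apply, LinearMap.zero_apply]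
  ring

lemma saddleForm_neg_snd {m : V →ₗ[ℝ] V →ₗ[ℝ] ℝ} (hm : ∀ u v, m u v = m v u)
    (a : V →ₗ[ℝ] V →ₗ[ℝ] ℝ) (p y : V) :
    saddleForm a m (p, y) (p, -y) = a p p + a y y := by
  simp only [saddleForm, map_neg, hm y p]
  ring

lemma saddleForm_sub_eq_of_galerkin (a ah m : V →ₗ[ℝ] V →ₗ[ℝ] ℝ) {u uₕ v w : V × V}
    (hw : saddleForm ah m uₕ w = saddleForm a m u w) :
    saddleForm ah m (v - uₕ) w = saddleForm (ah - a) 0 v w - saddleForm a m (u - v) w := by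
  rw [saddleForm_sub_left, saddleForm_sub_left, hw, ← saddleForm_sub_sub_left]
  ring

end Algebra

section Bounds

variable {V : Type*} [NormedAddCommGroup V] [Module ℝ V]

lemma abs_saddleForm_zero_le {b : V →ₗ[ℝ] V →ₗ[ℝ] ℝ} {κ : ℝ} (hκ : 0 ≤ κ) {p y q z : V}
    (hqp : |b q p| ≤ κ * ‖q‖ * ‖p‖) (hyz : |b y z| ≤ κ * ‖y‖ * ‖z‖) :
    |saddleForm b 0 (p, y) (q, z)| ≤ κ * (‖p‖ + ‖y‖) * (‖q‖ + ‖z‖) := by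
  simp only [saddleForm, LinearMap.zero_apply, sub_zero]
  have hcross : 0 ≤ κ * (‖p‖ * ‖z‖ + ‖y‖ * ‖q‖) := by positivity
  calc |b q p - b y z| ≤ |b q p| + |b y z| := abs_sub _ _
    _ ≤ κ * ‖q‖ * ‖p‖ + κ * ‖y‖ * ‖z‖ := add_le_add hqp hyz
    _ ≤ κ * (‖p‖ + ‖y‖) * (‖q‖ + ‖z‖) := by linarith

lemma abs_saddleForm_le {a m : V →ₗ[ℝ] V →ₗ[ℝ] ℝ} {Ca δ₁ δ₀ : ℝ} (hCa : 0 ≤ Ca)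
    (hbdd : ∀ u v : V, |a u v| ≤ Ca * ‖u‖ * ‖v‖) {p y q z : V} (hp : ‖p‖ ≤ δ₁) (hy : ‖y‖ ≤ δ₁)
    (hyq : |m y q| ≤ δ₀ * ‖q‖) (hpz : |m p z| ≤ δ₀ * ‖z‖) :
    |saddleForm a m (p, y) (q, z)| ≤ (Ca * δ₁ + δ₀) * (‖q‖ + ‖z‖) := by
  have hqp : |a q p| ≤ Ca * δ₁ * ‖q‖ :=
    (hbdd q p).trans (by rw [mul_right_comm]; gcongr)
  have hyz : |a y z| ≤ Ca * δ₁ * ‖z‖ :=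
    (hbdd y z).trans (by gcongr)
  simp only [saddleForm]
  calc |a q p - m y q - m p z - a y z|
      ≤ |a q p| + |m y q| + |m p z| + |a y z| := by
        refine (abs_sub _ _).trans (add_le_add_left ?_ _)
        exact (abs_sub _ _).trans (add_le_add_left (abs_sub _ _) _)
    _ ≤ (Ca * δ₁ + δ₀) * (‖q‖ + ‖z‖) := by linarith

end Bounds

theorem abstract_error_estimate_general {V : Type*} [NormedAddCommGroup V] [NormedSpace ℝ V]
    (Vh : Submodule ℝ V)
    (a ah m : V →ₗ[ℝ] V →ₗ[ℝ] ℝ) (hm : ∀ u v, m u v = m v u)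
    (α Ca κ δ₁ δ₀ : ℝ)
    (hα : 0 < α) (hCa : 0 ≤ Ca) (hκ : 0 ≤ κ) (hδ₀ : 0 ≤ δ₀)
    (hcoer : ∀ v ∈ Vh, α * ‖v‖^2 ≤ ah v v)
    (hbdd : ∀ u v : V, |a u v| ≤ Ca * ‖u‖ * ‖v‖)
    (hcons : ∀ u ∈ Vh, ∀ v ∈ Vh, |ah u v - a u v| ≤ κ * ‖u‖ * ‖v‖)
    (B Bh : V × V → V × V → ℝ)
    (hB : ∀ p y q z, B (p, y) (q, z) = a q p - m y q - m p z - a y z)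
    (hBh : ∀ p y q z, Bh (p, y) (q, z) = ah q p - m y q - m p z - ah y z)
    (F : (V × V) →ₗ[ℝ] ℝ)
    (pbar ybar : V)
    (hexact : ∀ q ∈ Vh, ∀ z ∈ Vh, B (pbar, ybar) (q, z) = F (q, z))
    (ph yh : V) (hphVh : ph ∈ Vh) (hyhVh : yh ∈ Vh)
    (hdisc : ∀ q ∈ Vh, ∀ z ∈ Vh, Bh (ph, yh) (q, z) = F (q, z))
    (Pp Py : V) (hPpVh : Pp ∈ Vh) (hPyVh : Py ∈ Vh)
    (hPp : ‖pbar - Pp‖ ≤ δ₁) (hPy : ‖ybar - Py‖ ≤ δ₁)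
    (hmp : ∀ z ∈ Vh, |m (pbar - Pp) z| ≤ δ₀ * ‖z‖)
    (hmy : ∀ q ∈ Vh, |m (ybar - Py) q| ≤ δ₀ * ‖q‖) :
    ‖Pp - ph‖ + ‖Py - yh‖ ≤ (4 / α) * (κ * (‖Pp‖ + ‖Py‖) + Ca * δ₁ + δ₀) := by
  set ep := Pp - ph
  set ey := Py - yh
  have hep : ep ∈ Vh := Vh.sub_mem hPpVh hphVh
  have hey : -ey ∈ Vh := Vh.neg_mem (Vh.sub_mem hPyVh hyhVh)
  have hB' : B = saddleForm a m := funext₂ fun (p, y) (q, z) => hB p y q z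
  have hBh' : Bh = saddleForm ah m := funext₂ fun (p, y) (q, z) => hBh p y q z
  have hgalerkin : saddleForm ah m (ph, yh) (ep, -ey) = saddleForm a m (pbar, ybar) (ep, -ey) := by
    rw [← hBh', ← hB', hdisc _ hep _ hey, hexact _ hep _ hey]
  have henergy : ah ep ep + ah ey ey = saddleForm (ah - a) 0 (Pp, Py) (ep, -ey)
      - saddleForm a m (pbar - Pp, ybar - Py) (ep, -ey) := by
    rw [← saddleForm_neg_snd hm]
    exact saddleForm_sub_eq_of_galerkin (v := (Pp, Py)) a ah m hgalerkin
  have hconsistency := abs_saddleForm_zero_le (b := ah - a) hκ (hcons ep hep Pp hPpVh)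
    (hcons Py hPyVh (-ey) hey)
  have hinterpolation := abs_saddleForm_le hCa hbdd hPp hPy (hmy ep hep) (hmp (-ey) hey)
  rw [norm_neg] at hconsistency hinterpolation
  set M := κ * (‖Pp‖ + ‖Py‖) + Ca * δ₁ + δ₀
  have hM : 0 ≤ M := by
    have hδ₁ : 0 ≤ δ₁ := (norm_nonneg _).trans hPp
    positivity
  have hcoercive : α * (‖ep‖ ^ 2 + ‖ey‖ ^ 2) ≤ ah ep ep + ah ey ey := by
    rw [mul_add]
    exact add_le_add (hcoer ep hep) (hcoer ey (neg_mem_iff.mp hey))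
  have hupper : ah ep ep + ah ey ey ≤ M * (‖ep‖ + ‖ey‖) := by
    rw [henergy]
    linarith [le_abs_self (saddleForm (ah - a) 0 (Pp, Py) (ep, -ey)),
      neg_abs_le (saddleForm a m (pbar - Pp, ybar - Py) (ep, -ey))]
  calc ‖ep‖ + ‖ey‖ ≤ 2 / α * M :=
        add_le_of_mul_sq_add_sq_le (norm_nonneg _) (norm_nonneg _) hα hM (hcoercive.trans hupper)
    _ ≤ 4 / α * M := by gcongr; norm_num

/-- Abstract form of the error estimate of Theorem 4.2: with `a_h` coercive on the subspace
`V_h`, `m` symmetric positive semidefinite on `V_h`, `a` bounded, `a_h` consistent with `a`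
on `V_h`, exact solution `(p̄, ȳ)` of the saddle-point problem `B = F`, discrete solution
`(p̄_h, ȳ_h)` of `B_h = F` on `V_h × V_h`, and interpolants `Πp̄, Πȳ ∈ V_h` with `H¹` error
`δ₁` and `L²`-residual error `δ₀`, one has
`‖Πp̄ - p̄_h‖ + ‖Πȳ - ȳ_h‖ ≤ (4/α)(κ(‖Πp̄‖ + ‖Πȳ‖) + C_a δ₁ + δ₀)`. -/
theorem abstract_error_estimate {V : Type*} [NormedAddCommGroup V] [NormedSpace ℝ V]
    (Vh : Submodule ℝ V)
    (a ah m : V →ₗ[ℝ] V →ₗ[ℝ] ℝ) (hm : ∀ u v, m u v = m v u)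
    (α Ca κ δ₁ δ₀ : ℝ)
    (hα : 0 < α) (hCa : 0 ≤ Ca) (hκ : 0 ≤ κ) (hδ₁ : 0 ≤ δ₁) (hδ₀ : 0 ≤ δ₀)
    (hcoer : ∀ v ∈ Vh, α * ‖v‖^2 ≤ ah v v)
    (hpsd : ∀ v ∈ Vh, 0 ≤ m v v)
    (hbdd : ∀ u v : V, |a u v| ≤ Ca * ‖u‖ * ‖v‖)
    (hcons : ∀ u ∈ Vh, ∀ v ∈ Vh, |ah u v - a u v| ≤ κ * ‖u‖ * ‖v‖)
    (B Bh : V × V → V × V → ℝ)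
    (hB : ∀ p y q z, B (p, y) (q, z) = a q p - m y q - m p z - a y z)
    (hBh : ∀ p y q z, Bh (p, y) (q, z) = ah q p - m y q - m p z - ah y z)
    (F : (V × V) →ₗ[ℝ] ℝ)
    (pbar ybar : V)
    (hexact : ∀ q ∈ Vh, ∀ z ∈ Vh, B (pbar, ybar) (q, z) = F (q, z))
    (ph yh : V) (hphVh : ph ∈ Vh) (hyhVh : yh ∈ Vh)
    (hdisc : ∀ q ∈ Vh, ∀ z ∈ Vh, Bh (ph, yh) (q, z) = F (q, z))
    (Pp Py : V) (hPpVh : Pp ∈ Vh) (hPyVh : Py ∈ Vh)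
    (hPp : ‖pbar - Pp‖ ≤ δ₁) (hPy : ‖ybar - Py‖ ≤ δ₁)
    (hmp : ∀ z ∈ Vh, |m (pbar - Pp) z| ≤ δ₀ * ‖z‖)
    (hmy : ∀ q ∈ Vh, |m (ybar - Py) q| ≤ δ₀ * ‖q‖) :
    ‖Pp - ph‖ + ‖Py - yh‖ ≤ (4 / α) * (κ * (‖Pp‖ + ‖Py‖) + Ca * δ₁ + δ₀) :=
  abstract_error_estimate_general Vh a ah m hm α Ca κ δ₁ δ₀ hα hCa hκ hδ₀ hcoer hbdd hcons B Bh hB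
    hBh F pbar ybar hexact ph yh hphVh hyhVh hdisc Pp Py hPpVh hPyVh hPp hPy hmp hmy
end
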